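/- arXiv:2002.00853 — 4 statements merged into one kernel-verified Lean document; each statement's English description precedes it below -/
import Mathlib

section
/- Let X be a connected topological space with at least two points, and suppose there is a point p ∈ X such that X \ {p} is zero-dimensional (has a basis of clopen sets in the subspace topology). If X is a separable metrizable space, this is impossible; i.e., a separable metrizable zero-dimensional space with at least two points cannot become connected by adjoining a single point (within a metrizable space). -/
/-!
Pick a point `a ≠ p` and, by regularity, a closed neighbourhood `V` of `a` missing `p`. A basic
clopen set `U` of `Y \ {p}` with `a ∈ U ⊆ V` is open in `Y` because `Y \ {p}` is open, and closed
in `Y` because its closure stays inside `V`, away from `p`. So `U` is a proper nonempty clopen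
subset of `Y`.
-/

open Topology

theorem isClopen_image_val_of_closure_subset {X : Type*} [TopologicalSpace X] {O : Set X}
    (hO : IsOpen O) {U : Set O} (hU : IsClopen U) (hcl : closure (Subtype.val '' U) ⊆ O) :
    IsClopen (Subtype.val '' U) := by
  refine ⟨isClosed_of_closure_subset fun y hy => ?_, hO.isOpenMap_subtype_val U hU.isOpen⟩
  have hclosure : Subtype.val ⁻¹' closure (Subtype.val '' U) = U := by
    rw [← IsInducing.subtypeVal.closure_eq_preimage_closure_image, hU.isClosed.closure_eq]
  exact ⟨⟨y, hcl hy⟩, hclosure.subset hy, rfl⟩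

theorem exists_isClopen_mem_notMem_of_isTopologicalBasis_compl_singleton {Y : Type*}
    [TopologicalSpace Y] [T3Space Y] {p : Y} {B : Set (Set ({p}ᶜ : Set Y))}
    (hB : TopologicalSpace.IsTopologicalBasis B) (hclopen : ∀ U ∈ B, IsClopen U)
    (a : ({p}ᶜ : Set Y)) : ∃ S : Set Y, IsClopen S ∧ (a : Y) ∈ S ∧ p ∉ S := by
  obtain ⟨V, hVa, hVclosed, hVp⟩ :=
    exists_mem_nhds_isClosed_subset (isOpen_compl_singleton.mem_nhds a.2)
  obtain ⟨U, hUB, haU, hUV⟩ :=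
    hB.mem_nhds_iff.mp (continuous_subtype_val.continuousAt.preimage_mem_nhds hVa)
  have hcl : closure (Subtype.val '' U) ⊆ V :=
    closure_minimal (Set.image_subset_iff.mpr hUV) hVclosed
  refine ⟨Subtype.val '' U, ?_, ⟨a, haU, rfl⟩, fun ⟨u, _, hu⟩ => u.2 hu⟩
  exact isClopen_image_val_of_closure_subset isOpen_compl_singleton (hclopen U hUB)
    (hcl.trans hVp)

theorem stmt_3_general {Y : Type*} [MetricSpace Y] (p : Y)
    (h2 : ∃ a b : (({p}ᶜ : Set Y)), a ≠ b)
    (B : Set (Set (({p}ᶜ : Set Y))))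
    (hB : TopologicalSpace.IsTopologicalBasis B)
    (hclopen : ∀ U ∈ B, IsClopen U) :
    ¬ ConnectedSpace Y := by
  intro _
  obtain ⟨a, -⟩ := h2
  obtain ⟨S, hS, haS, hpS⟩ :=
    exists_isClopen_mem_notMem_of_isTopologicalBasis_compl_singleton hB hclopen a
  rcases isClopen_iff.mp hS with hempty | huniv
  · simp [hempty] at haS
  · simp [huniv] at hpS

/-- A separable metrizable zero-dimensional space with at least two points cannot be
made connected by adjoining a single point within a metrizable space: if `Y` is a
separable metric space, `p ∈ Y`, the subspace `Y \ {p}` has at least two points and a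
basis of clopen sets, then `Y` is not connected. -/
theorem stmt_3 {Y : Type*} [MetricSpace Y] [TopologicalSpace.SeparableSpace Y] (p : Y)
    (h2 : ∃ a b : (({p}ᶜ : Set Y)), a ≠ b)
    (B : Set (Set (({p}ᶜ : Set Y))))
    (hB : TopologicalSpace.IsTopologicalBasis B)
    (hclopen : ∀ U ∈ B, IsClopen U) :
    ¬ ConnectedSpace Y :=
  stmt_3_general p h2 B hB hclopen
end

section
/- Let f : ℂ → ℂ be any function, let M : ℝ → ℝ, and let R > 0 be such that M^n(R) → ∞ and M^{n+1}(R) − 2 M^n(R) > κ for all n ≥ m (for some fixed m ∈ ℕ and κ > 0). Suppose s ∈ ℂ and ℓ ≥ 0 satisfy |f^{ℓ+n}(s)| ≥ M^n(R) for all n ∈ ℕ, and suppose z₀ ∈ ℂ is such that for every ℓ' ≥ 0 there exists n with |f^{ℓ'+n}(z₀)| < M^n(R). Then there exists n ∈ ℕ with |f^n(s)| > 2|f^n(z₀)| + κ. -/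
/-!
Since `M^n(R) → ∞` and `M^{n+1}(R) > 2 M^n(R) + κ` eventually, the orbit `M^n(R)` is eventually
increasing, so one shift `K` satisfies `M^{K+n}(R) > 2 M^n(R) + κ` for every `n` at once: the
tail by monotonicity, the finitely many remaining `n` because `M^{K+n}(R) → ∞` as `K → ∞`.
Applying the hypothesis on `z₀` with `ℓ' = ℓ + K` gives `n` with `|f^{ℓ+K+n}(z₀)| < M^n(R)`, while
`|f^{ℓ+K+n}(s)| ≥ M^{K+n}(R)`.
-/

open Filter

section ShiftGap

variable {a : ℕ → ℝ} {κ : ℝ}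

theorem exists_monotone_shift_of_two_mul_add_lt (htend : Tendsto a atTop atTop)
    (hgap : ∀ᶠ n in atTop, 2 * a n + κ < a (n + 1)) :
    ∃ N, Monotone fun k => a (N + k) := by
  obtain ⟨N, hN⟩ := (hgap.and (htend.eventually_ge_atTop (-κ))).exists_forall_of_atTop
  refine ⟨N, monotone_nat_of_le_succ fun k => ?_⟩
  obtain ⟨hstep, hpos⟩ := hN (N + k) (Nat.le_add_right N k)
  show a (N + k) ≤ a (N + k + 1)
  -- `a (n + 1) > a n + (a n + κ)` and `a n + κ ≥ 0` in the tail
  linarith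

theorem exists_shift_forall_two_mul_add_lt (htend : Tendsto a atTop atTop)
    (hgap : ∀ᶠ n in atTop, 2 * a n + κ < a (n + 1)) :
    ∃ K, ∀ n, 2 * a n + κ < a (K + n) := by
  obtain ⟨N₁, hN₁⟩ := eventually_atTop.1 hgap
  obtain ⟨N₂, hmono⟩ := exists_monotone_shift_of_two_mul_add_lt htend hgap
  set N := max N₁ N₂
  have hhead : ∀ᶠ K in atTop, ∀ n ∈ Finset.range N, 2 * a n + κ < a (K + n) :=
    (eventually_all_finset _).2 fun n _ =>
      (htend.comp (tendsto_add_atTop_nat n)).eventually_gt_atTop _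
  obtain ⟨K, hK, hK1⟩ := (hhead.and (eventually_ge_atTop 1)).exists
  refine ⟨K, fun n => ?_⟩
  by_cases hn : n < N
  · exact hK n (Finset.mem_range.2 hn)
  · have htail : a (n + 1) ≤ a (K + n) := by
      obtain ⟨i, hi⟩ := Nat.exists_eq_add_of_le (show N₂ ≤ n + 1 by omega)
      obtain ⟨j, hj⟩ := Nat.exists_eq_add_of_le (show N₂ ≤ K + n by omega)
      rw [hi, hj]
      exact hmono (by omega)
    linarith [hN₁ n (by omega)]

end ShiftGap

theorem stmt_7_general (f : ℂ → ℂ) (M : ℝ → ℝ) (R κ : ℝ) (m : ℕ)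
    (htend : Filter.Tendsto (fun n : ℕ => M^[n] R) Filter.atTop Filter.atTop)
    (hgap : ∀ n : ℕ, m ≤ n → M^[n + 1] R - 2 * M^[n] R > κ)
    (s : ℂ) (ℓ : ℕ)
    (hs : ∀ n : ℕ, M^[n] R ≤ ‖f^[ℓ + n] s‖)
    (z₀ : ℂ)
    (hz : ∀ ℓ' : ℕ, ∃ n : ℕ, ‖f^[ℓ' + n] z₀‖ < M^[n] R) :
    ∃ n : ℕ, ‖f^[n] s‖ > 2 * ‖f^[n] z₀‖ + κ := by
  have hgap' : ∀ᶠ n in atTop, 2 * M^[n] R + κ < M^[n + 1] R :=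
    eventually_atTop.2 ⟨m, fun n hn => by linarith [hgap n hn]⟩
  obtain ⟨K, hK⟩ := exists_shift_forall_two_mul_add_lt htend hgap'
  obtain ⟨n, hn⟩ := hz (ℓ + K)
  refine ⟨ℓ + K + n, ?_⟩
  have hsn : M^[K + n] R ≤ ‖f^[ℓ + K + n] s‖ := by
    simpa only [Nat.add_assoc] using hs (K + n)
  linarith [hK n]

/-- Abstract core of Lemma 7: if `s` is fast escaping relative to `(M, R)` and `z₀` is not,
and `M^{n+1}(R) - 2M^n(R) > κ` for all `n ≥ m` with `M^n(R) → ∞`, then for some `n`,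
`|f^n(s)| > 2|f^n(z₀)| + κ`. -/
theorem stmt_7 (f : ℂ → ℂ) (M : ℝ → ℝ) (R κ : ℝ) (m : ℕ)
    (hR : 0 < R) (hκ : 0 < κ)
    (htend : Filter.Tendsto (fun n : ℕ => M^[n] R) Filter.atTop Filter.atTop)
    (hgap : ∀ n : ℕ, m ≤ n → M^[n + 1] R - 2 * M^[n] R > κ)
    (s : ℂ) (ℓ : ℕ)
    (hs : ∀ n : ℕ, M^[n] R ≤ ‖f^[ℓ + n] s‖)
    (z₀ : ℂ)
    (hz : ∀ ℓ' : ℕ, ∃ n : ℕ, ‖f^[ℓ' + n] z₀‖ < M^[n] R) :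
    ∃ n : ℕ, ‖f^[n] s‖ > 2 * ‖f^[n] z₀‖ + κ :=
  stmt_7_general f M R κ m htend hgap s ℓ hs z₀ hz
end

section
/- Let J ⊆ ℂ be a closed set, z₀ ∈ J, and U a bounded open subset of ℂ with z₀ ∈ U. Suppose V is an open subset of ℂ with z₀ ∈ V, and (O_n) is a decreasing sequence of open sets with z₀ ∈ O_n for all n, such that ⋂_n closure(O_n) ∩ J equals the connected component C of z₀ in J, each frontier ∂O_n is disjoint from J, the frontier ∂V meets J only in a set A, and C ∩ ∂U ∩ closure(V) = ∅. Then there exists n such that closure(O_n) ∩ closure(V) ∩ ∂U ∩ J = ∅, and for this n the set O_n ∩ V ∩ U ∩ (J \ A) is clopen in the subspace J \ A, contains z₀ (provided z₀ ∉ A), and is contained in U. -/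
/-!
The closures of the `O n` shrink to `C`, and `C` misses the compact set
`closure V ∩ frontier U ∩ J`, so some single `closure (O n)` already misses it. For that `n`
the frontier of `O n ∩ V ∩ U` lies in `frontier (O n) ∪ frontier V ∪ (closure (O n) ∩
closure V ∩ frontier U)`, and each of the three pieces meets `J` only inside `A`; an open set
whose frontier avoids `J \ A` cuts out a clopen subset of `J \ A`.
-/

open Set

theorem IsCompact.exists_closure_inter_eq_empty_of_antitone {X ι : Type*} [TopologicalSpace X]
    [Preorder ι] [IsDirectedOrder ι] [Nonempty ι] {K : Set X} (hK : IsCompact K)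
    {O : ι → Set X} (hO : Antitone O) (h : (⋂ i, closure (O i)) ∩ K = ∅) :
    ∃ i, closure (O i) ∩ K = ∅ := by
  rw [inter_comm] at h
  obtain ⟨i, hi⟩ := hK.elim_directed_family_closed _ (fun _ ↦ isClosed_closure) h
    (Antitone.directed_ge fun _ _ hij ↦ closure_mono (hO hij))
  exact ⟨i, by rwa [inter_comm]⟩

theorem frontier_inter_inter_subset {X : Type*} [TopologicalSpace X] (s t u : Set X) :
    frontier (s ∩ t ∩ u) ⊆
      frontier s ∪ frontier t ∪ closure s ∩ closure t ∩ frontier u := by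
  intro z hz
  rcases frontier_inter_subset _ _ hz with ⟨hst, -⟩ | ⟨hst, hu⟩
  · rcases frontier_inter_subset _ _ hst with ⟨hs, -⟩ | ⟨-, ht⟩
    exacts [Or.inl (Or.inl hs), Or.inl (Or.inr ht)]
  · exact Or.inr ⟨closure_inter_subset_inter_closure _ _ hst, hu⟩

theorem stmt_16_general (J : Set ℂ) (hJ : IsClosed J) (z₀ : ℂ) (hz₀ : z₀ ∈ J)
    (U : Set ℂ) (hUo : IsOpen U) (hUb : Bornology.IsBounded U) (hz₀U : z₀ ∈ U)
    (V : Set ℂ) (hVo : IsOpen V) (hz₀V : z₀ ∈ V)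
    (A : Set ℂ) (hz₀A : z₀ ∉ A)
    (Oseq : ℕ → Set ℂ) (hOo : ∀ n, IsOpen (Oseq n))
    (hOdec : ∀ n, Oseq (n + 1) ⊆ Oseq n) (hz₀O : ∀ n, z₀ ∈ Oseq n)
    (C : Set ℂ)
    (hOC : (⋂ n, closure (Oseq n)) ∩ J = C)
    (hOfr : ∀ n, frontier (Oseq n) ∩ J = ∅)
    (hVfr : frontier V ∩ J ⊆ A)
    (hCU : C ∩ frontier U ∩ closure V = ∅) :
    ∃ n : ℕ, closure (Oseq n) ∩ closure V ∩ frontier U ∩ J = ∅ ∧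
      IsClopen ((Subtype.val ⁻¹' (Oseq n ∩ V ∩ U) : Set (J \ A : Set ℂ))) ∧
      z₀ ∈ Oseq n ∩ V ∩ U ∩ (J \ A) ∧
      Oseq n ∩ V ∩ U ∩ (J \ A) ⊆ U := by
  have hK : IsCompact (closure V ∩ frontier U ∩ J) :=
    Metric.isCompact_of_isClosed_isBounded (isClosed_closure.inter isClosed_frontier |>.inter hJ)
      (hUb.closure.subset (inter_subset_left.trans (inter_subset_right.trans
        frontier_subset_closure)))
  have hCK : (⋂ n, closure (Oseq n)) ∩ (closure V ∩ frontier U ∩ J) = ∅ :=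
    eq_empty_of_subset_empty fun z ⟨hzO, ⟨hzV, hzU⟩, hzJ⟩ ↦
      hCU ▸ ⟨⟨hOC ▸ ⟨hzO, hzJ⟩, hzU⟩, hzV⟩
  obtain ⟨n, hn⟩ := hK.exists_closure_inter_eq_empty_of_antitone
    (antitone_nat_of_succ_le hOdec) hCK
  simp only [← inter_assoc] at hn
  have hfr : Disjoint (frontier (Oseq n ∩ V ∩ U)) (J \ A) := by
    refine disjoint_left.2 fun z hz ⟨hzJ, hzA⟩ ↦ ?_
    rcases frontier_inter_inter_subset _ _ _ hz with (hzO | hzV) | hzU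
    · exact (hOfr n).subset ⟨hzO, hzJ⟩
    · exact hzA (hVfr ⟨hzV, hzJ⟩)
    · exact hn.subset ⟨hzU, hzJ⟩
  exact ⟨n, hn, isClopen_preimage_val ((hOo n).inter hVo |>.inter hUo) hfr,
    ⟨⟨⟨hz₀O n, hz₀V⟩, hz₀U⟩, hz₀, hz₀A⟩, fun _ hx ↦ hx.1.2⟩

/-- Combinatorial core of the main theorem: given the closed set `J`, the bounded open
neighborhood `U` of `z₀`, the open set `V`, and the decreasing sequence `Oseq` of open
sets whose closures intersect down to the connected component `C` of `z₀` in `J`, there is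
`n` with `closure (Oseq n) ∩ closure V ∩ frontier U ∩ J = ∅`, and then
`Oseq n ∩ V ∩ U ∩ (J \ A)` is a clopen subset of `J \ A` containing `z₀` and contained in `U`. -/
theorem stmt_16 (J : Set ℂ) (hJ : IsClosed J) (z₀ : ℂ) (hz₀ : z₀ ∈ J)
    (U : Set ℂ) (hUo : IsOpen U) (hUb : Bornology.IsBounded U) (hz₀U : z₀ ∈ U)
    (V : Set ℂ) (hVo : IsOpen V) (hz₀V : z₀ ∈ V)
    (A : Set ℂ) (hz₀A : z₀ ∉ A)
    (Oseq : ℕ → Set ℂ) (hOo : ∀ n, IsOpen (Oseq n))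
    (hOdec : ∀ n, Oseq (n + 1) ⊆ Oseq n) (hz₀O : ∀ n, z₀ ∈ Oseq n)
    (C : Set ℂ)
    (hC : C = Subtype.val '' connectedComponent (⟨z₀, hz₀⟩ : J))
    (hOC : (⋂ n, closure (Oseq n)) ∩ J = C)
    (hOfr : ∀ n, frontier (Oseq n) ∩ J = ∅)
    (hVfr : frontier V ∩ J ⊆ A)
    (hCU : C ∩ frontier U ∩ closure V = ∅) :
    ∃ n : ℕ, closure (Oseq n) ∩ closure V ∩ frontier U ∩ J = ∅ ∧
      IsClopen ((Subtype.val ⁻¹' (Oseq n ∩ V ∩ U) : Set (J \ A : Set ℂ))) ∧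
      z₀ ∈ Oseq n ∩ V ∩ U ∩ (J \ A) ∧
      Oseq n ∩ V ∩ U ∩ (J \ A) ⊆ U :=
  stmt_16_general J hJ z₀ hz₀ U hUo hUb hz₀U V hVo hz₀V A hz₀A Oseq hOo hOdec hz₀O C hOC hOfr hVfr
    hCU
end

section
/- Suppose X ⊆ ℂ is a G_δ subset of ℂ, X is contained in a closed set J ⊆ ℂ, both X and J \ X are dense in J, and X is zero-dimensional and nonempty. Then X is homeomorphic to the space of irrational numbers. -/
/-!
A `G_δ` subset of a Polish space is Polish, and the density of `X` and of `J \ X` in `J`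
forces every nonempty open subset of `X` to be non-compact. By the Alexandroff–Urysohn
characterization, a nonempty Polish space with a clopen basis and no nonempty compact open set
is homeomorphic to Baire space `ℕ → ℕ`: repeatedly partition into countably infinitely many
nonempty clopen pieces of shrinking diameter and send a sequence of indices to the point of the
corresponding branch. The irrationals satisfy the same hypotheses (inside `J = ℝ`).
-/

open Set Topology TopologicalSpace Function Metric PiNat
open scoped ENNReal

theorem IsGδ.polishSpace {α : Type*} [TopologicalSpace α] [PolishSpace α] {s : Set α}
    (hs : IsGδ s) : PolishSpace s := by
  obtain ⟨U, hU, rfl⟩ := isGδ_iff_eq_iInter_nat.1 hs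
  have := fun n => (hU n).polishSpace
  let diag : (⋂ n, U n : Set α) → ∀ n, U n := fun x n => ⟨x, mem_iInter.1 x.2 n⟩
  have hdiag : Continuous diag := continuous_pi fun n => continuous_subtype_val.subtype_mk _
  have hrange : range diag = ⋂ n, {f | (f n : α) = f 0} := by
    refine Subset.antisymm (range_subset_iff.2 fun x => mem_iInter.2 fun n => rfl) fun f hf => ?_
    have hf : ∀ n, (f n : α) = f 0 := fun n => mem_iInter.1 hf n
    refine ⟨⟨f 0, mem_iInter.2 fun n => hf n ▸ (f n).2⟩, funext fun n => Subtype.ext (hf n).symm⟩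
  refine IsClosedEmbedding.polishSpace (f := diag) ⟨.of_comp hdiag
    ((continuous_apply 0).subtype_val) IsEmbedding.subtypeVal, ?_⟩
  rw [hrange]
  exact isClosed_iInter fun n =>
    isClosed_eq (continuous_apply n).subtype_val (continuous_apply 0).subtype_val

theorem IsCompact.eq_empty_of_isOpen_of_codense {α : Type*} [TopologicalSpace α] [T2Space α]
    {S J : Set α} (hSJ : S ⊆ J) (hdense : J ⊆ closure S) (hcodense : J ⊆ closure (J \ S))
    {K : Set S} (hK : IsCompact K) (hKo : IsOpen K) : K = ∅ := by
  obtain ⟨O, hO, rfl⟩ := isOpen_induced_iff.1 hKo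
  have hclosed : IsClosed (O ∩ S) := by
    simpa [Subtype.image_preimage_coe, inter_comm] using (hK.image continuous_subtype_val).isClosed
  have hJO : J ∩ O ⊆ S := fun y hy =>
    (hclosed.closure_subset (hO.inter_closure ⟨hy.2, hdense hy.1⟩)).2
  refine eq_empty_of_forall_notMem fun x hx => ?_
  obtain ⟨z, hzO, hzJ, hzS⟩ := mem_closure_iff.1 (hcodense (hSJ x.2)) O hO hx
  exact hzS (hJO ⟨hzJ, hzO⟩)

namespace CantorScheme

variable {α β : Type*} {A : List β → Set α}

theorem exists_forall_mem_res (hroot : A [] = univ) (hcover : ∀ l, A l ⊆ ⋃ a, A (a :: l))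
    (y : α) : ∃ x : ℕ → β, ∀ n, y ∈ A (res x n) := by
  choose next hnext using fun l : {l // y ∈ A l} => mem_iUnion.1 (hcover l.1 l.2)
  let L : ℕ → {l // y ∈ A l} :=
    fun n => Nat.rec ⟨[], hroot ▸ mem_univ y⟩ (fun _ l => ⟨next l :: l.1, hnext l⟩) n
  have hres : ∀ n, res (fun i => next (L i)) n = (L n).1 := by
    intro n
    induction n with
    | zero => rfl
    | succ n ih => rw [res_succ, ih]
  exact ⟨fun i => next (L i), fun n => hres n ▸ (L n).2⟩

theorem eq_of_mem_of_length_eq (hanti : CantorScheme.Antitone A) (hdisj : CantorScheme.Disjoint A)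
    {y : α} {l₁ l₂ : List β} (h₁ : y ∈ A l₁) (h₂ : y ∈ A l₂) (hlen : l₁.length = l₂.length) :
    l₁ = l₂ := by
  induction l₁ generalizing l₂ with
  | nil => exact (List.length_eq_zero_iff.1 hlen.symm).symm
  | cons a l ih =>
    obtain _ | ⟨b, l'⟩ := l₂
    · simp at hlen
    obtain rfl : l = l' := ih (hanti l a h₁) (hanti l' b h₂) (by simpa using hlen)
    by_contra hab
    exact (hdisj l fun h => hab (congrArg (· :: l) h)).le_bot ⟨h₁, h₂⟩

theorem nonempty_homeomorph_of_isClopen [MetricSpace α] [CompleteSpace α]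
    {A : List ℕ → Set α} (hroot : A [] = univ) (hclopen : ∀ l, IsClopen (A l))
    (hne : ∀ l, (A l).Nonempty) (hcover : ∀ l, A l ⊆ ⋃ a, A (a :: l))
    (hanti : CantorScheme.Antitone A) (hdisj : CantorScheme.Disjoint A)
    (hdiam : VanishingDiam A) : Nonempty ((ℕ → ℕ) ≃ₜ α) := by
  have htot := (hanti.closureAntitone fun l => (hclopen l).isClosed).map_of_vanishingDiam hdiam hne
  let f : (ℕ → ℕ) → α := fun x => (inducedMap A).2 ⟨x, htot ▸ mem_univ x⟩
  have hf_mem : ∀ x n, f x ∈ A (res x n) := fun x n => map_mem _ n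
  have hf_eq : ∀ x y, (∀ n, y ∈ A (res x n)) → f x = y := by
    intro x y hy
    by_contra hxy
    obtain ⟨n, hn⟩ := hdiam.dist_lt _ (dist_pos.2 hxy) x
    exact (hn _ (hf_mem x n) _ (hy n)).false
  have himage : ∀ x n, f '' cylinder x n = A (res x n) := by
    intro x n
    refine (image_subset_iff.2 fun z hz => ?_).antisymm fun y hy => ?_
    · rw [cylinder_eq_res] at hz
      exact hz ▸ hf_mem z n
    · obtain ⟨z, hz⟩ := exists_forall_mem_res hroot hcover y
      refine ⟨z, ?_, hf_eq z y hz⟩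
      rw [cylinder_eq_res]
      exact eq_of_mem_of_length_eq hanti hdisj (hz n) hy (by simp)
  have hinj : Injective f := hdisj.map_injective.comp fun x y h => congrArg Subtype.val h
  have hsurj : Surjective f := fun y =>
    (exists_forall_mem_res hroot hcover y).imp fun x hx => hf_eq x y hx
  have hcont : Continuous f := hdiam.map_continuous.comp (continuous_id.subtype_mk _)
  have hopen : IsOpenMap f := by
    refine (isTopologicalBasis_cylinders _).isOpenMap_iff.2 ?_
    rintro _ ⟨x, n, rfl⟩
    exact himage x n ▸ (hclopen _).isOpen
  exact ⟨(Equiv.ofBijective f ⟨hinj, hsurj⟩).toHomeomorphOfContinuousOpen hcont hopen⟩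

end CantorScheme

def HasSmallClopenPartitions (α : Type*) [PseudoEMetricSpace α] : Prop :=
  ∀ U : Set α, IsClopen U → U.Nonempty → ∀ ε > 0, ∃ V : ℕ → Set α,
    (∀ n, IsClopen (V n) ∧ (V n).Nonempty) ∧ Pairwise (Disjoint on V) ∧ ⋃ n, V n = U ∧
      ∀ n, ediam (V n) ≤ ε

section SmallClopenPartitions

variable {α : Type*} [PseudoEMetricSpace α]

theorem exists_iUnion_eq_of_isTopologicalBasis [SecondCountableTopology α] {B : Set (Set α)}
    (hB : IsTopologicalBasis B) (hclopen : ∀ W ∈ B, IsClopen W) {U : Set α} (hU : IsOpen U)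
    {ε : ℝ≥0∞} (hε : 0 < ε) :
    ∃ W : ℕ → Set α, (∀ n, IsClopen (W n)) ∧ ⋃ n, W n = U ∧ ∀ n, ediam (W n) ≤ ε := by
  let C := {W ∈ B | W ⊆ U ∧ ediam W ≤ ε}
  have hC : ⋃₀ C = U := by
    refine (sUnion_subset fun W hW => hW.2.1).antisymm fun x hx => ?_
    obtain ⟨W, hWB, hxW, hWU⟩ := hB.exists_subset_of_mem_open (mem_inter (mem_eball_self
      (ENNReal.half_pos hε.ne')) hx) (isOpen_eball.inter hU)
    refine ⟨W, ⟨hWB, hWU.trans inter_subset_right, ?_⟩, hxW⟩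
    calc ediam W ≤ 2 * (ε / 2) := (ediam_mono (hWU.trans inter_subset_left)).trans ediam_eball_le
      _ = ε := ENNReal.mul_div_cancel two_ne_zero ENNReal.ofNat_ne_top
  obtain ⟨C', hC'count, hC'C, hC'U⟩ :=
    isOpen_sUnion_countable C fun W hW => (hclopen W hW.1).isOpen
  obtain ⟨W, hW⟩ := (hC'count.insert ∅).exists_eq_range (insert_nonempty _ _)
  have hWC : ∀ n, W n = ∅ ∨ W n ∈ C := fun n =>
    (mem_insert_iff.1 (hW ▸ mem_range_self n)).imp_right (hC'C ·)
  refine ⟨W, fun n => ?_, ?_, fun n => ?_⟩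
  · obtain h | h := hWC n
    · exact h ▸ isClopen_empty
    · exact hclopen _ h.1
  · rw [← sUnion_range, ← hW, sUnion_insert, empty_union, hC'U, hC]
  · obtain h | h := hWC n
    · simp [h]
    · exact h.2.2

theorem exists_pairwise_disjoint_iUnion_eq_of_isTopologicalBasis [SecondCountableTopology α]
    {B : Set (Set α)} (hB : IsTopologicalBasis B) (hclopen : ∀ W ∈ B, IsClopen W) {U : Set α}
    (hU : IsOpen U) {ε : ℝ≥0∞} (hε : 0 < ε) :
    ∃ D : ℕ → Set α, (∀ n, IsClopen (D n)) ∧ Pairwise (Disjoint on D) ∧ ⋃ n, D n = U ∧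
      ∀ n, ediam (D n) ≤ ε := by
  obtain ⟨W, hWclopen, hWU, hWdiam⟩ := exists_iUnion_eq_of_isTopologicalBasis hB hclopen hU hε
  exact ⟨disjointed W, fun n => disjointedRec (fun _ i ht => ht.diff (hWclopen i)) (hWclopen n),
    disjoint_disjointed W, iUnion_disjointed.trans hWU,
    fun n => (ediam_mono (disjointed_subset W n)).trans (hWdiam n)⟩

theorem infinite_setOf_nonempty_of_not_totallyBounded {U : Set α} (hU : ¬TotallyBounded U) :
    ∃ δ > 0, ∀ D : ℕ → Set α, U ⊆ ⋃ n, D n → (∀ n, ediam (D n) < δ) →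
      {n | (D n).Nonempty}.Infinite := by
  simp only [EMetric.totallyBounded_iff, not_forall, not_exists, not_and] at hU
  obtain ⟨δ, hδ, hU⟩ := hU
  refine ⟨δ, hδ, fun D hUD hD hfin => ?_⟩
  choose y hy using fun n : {n | (D n).Nonempty} => n.2
  have := hfin.to_subtype
  refine hU (range y) (finite_range y) fun z hz => ?_
  obtain ⟨n, hzn⟩ := mem_iUnion.1 (hUD hz)
  exact mem_biUnion (mem_range_self ⟨n, z, hzn⟩)
    (mem_eball.2 ((edist_le_ediam_of_mem hzn (hy ⟨n, z, hzn⟩)).trans_lt (hD n)))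

theorem hasSmallClopenPartitions_of_isTopologicalBasis [CompleteSpace α]
    [SecondCountableTopology α] {B : Set (Set α)} (hB : IsTopologicalBasis B)
    (hclopen : ∀ W ∈ B, IsClopen W) (hnc : ∀ K : Set α, IsCompact K → IsOpen K → K = ∅) :
    HasSmallClopenPartitions α := by
  intro U hU hUne ε hε
  have hUtb : ¬TotallyBounded U := fun h => hUne.ne_empty <|
    hnc U (isCompact_iff_totallyBounded_isComplete.2 ⟨h, hU.isClosed.isComplete⟩) hU.isOpen
  obtain ⟨δ, hδ, hinf⟩ := infinite_setOf_nonempty_of_not_totallyBounded hUtb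
  obtain ⟨δ', hδ'pos, hδ'δ⟩ := exists_between hδ
  obtain ⟨D, hDclopen, hDdisj, hDU, hDdiam⟩ :=
    exists_pairwise_disjoint_iUnion_eq_of_isTopologicalBasis hB hclopen hU.isOpen
      (lt_min hε hδ'pos)
  have hN := hinf D hDU.ge fun n => (hDdiam n).trans_lt ((min_le_right _ _).trans_lt hδ'δ)
  refine ⟨fun n => D (Nat.nth (fun m => (D m).Nonempty) n),
    fun n => ⟨hDclopen _, Nat.nth_mem_of_infinite hN n⟩,
    hDdisj.comp_of_injective (Nat.nth_injective hN), ?_,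
    fun n => (hDdiam _).trans (min_le_left _ _)⟩
  refine (iUnion_subset fun n => hDU ▸ subset_iUnion _ _).antisymm fun x hx => ?_
  obtain ⟨m, hxm⟩ := mem_iUnion.1 (hDU.ge hx)
  obtain ⟨n, rfl⟩ : m ∈ range (Nat.nth fun m => (D m).Nonempty) :=
    (Nat.range_nth_of_infinite hN).ge ⟨x, hxm⟩
  exact mem_iUnion.2 ⟨n, hxm⟩

end SmallClopenPartitions

theorem HasSmallClopenPartitions.nonempty_homeomorph {α : Type*} [MetricSpace α]
    [CompleteSpace α] [Nonempty α] (h : HasSmallClopenPartitions α) :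
    Nonempty ((ℕ → ℕ) ≃ₜ α) := by
  let P := {U : Set α // IsClopen U ∧ U.Nonempty}
  choose V hV using fun (U : P) (n : ℕ) =>
    h U.1 U.2.1 U.2.2 ((n : ℝ≥0∞) + 1)⁻¹ (ENNReal.inv_pos.2 (by simp))
  let G : List ℕ → P := fun l =>
    l.rec ⟨univ, isClopen_univ, univ_nonempty⟩ fun a l U => ⟨V U l.length a, (hV U l.length).1 a⟩
  let A : List ℕ → Set α := fun l => (G l).1
  have hunion : ∀ l, ⋃ a, A (a :: l) = A l := fun l => (hV (G l) l.length).2.2.1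
  have hdiam : ∀ x n, ediam (A (res x n)) ≤ (n : ℝ≥0∞)⁻¹ := by
    rintro x (_ | n)
    · simp
    · rw [res_succ, Nat.cast_succ]
      show ediam (V (G (res x n)) (res x n).length (x n)) ≤ _
      simpa only [res_length] using (hV (G (res x n)) (res x n).length).2.2.2 (x n)
  refine CantorScheme.nonempty_homeomorph_of_isClopen (A := A) rfl (fun l => (G l).2.1)
    (fun l => (G l).2.2) (fun l => (hunion l).ge)
    (fun l a => hunion l ▸ subset_iUnion (fun b => A (b :: l)) a)
    (fun l => (hV (G l) l.length).2.1) fun x => ?_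
  exact tendsto_of_tendsto_of_tendsto_of_le_of_le tendsto_const_nhds
    ENNReal.tendsto_inv_nat_nhds_zero (fun _ => zero_le) (hdiam x)

theorem nonempty_homeomorph_natNat_of_isTopologicalBasis {α : Type*} [TopologicalSpace α]
    [PolishSpace α] [Nonempty α] {B : Set (Set α)} (hB : IsTopologicalBasis B)
    (hclopen : ∀ W ∈ B, IsClopen W) (hnc : ∀ K : Set α, IsCompact K → IsOpen K → K = ∅) :
    Nonempty ((ℕ → ℕ) ≃ₜ α) :=
  letI := upgradeIsCompletelyMetrizable α
  (hasSmallClopenPartitions_of_isTopologicalBasis hB hclopen hnc).nonempty_homeomorph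

theorem IsGδ.nonempty_homeomorph_natNat {α : Type*} [TopologicalSpace α] [PolishSpace α]
    {S J : Set α} (hS : IsGδ S) (hSJ : S ⊆ J) (hdense : J ⊆ closure S)
    (hcodense : J ⊆ closure (J \ S)) (hne : S.Nonempty) {B : Set (Set S)}
    (hB : IsTopologicalBasis B) (hclopen : ∀ W ∈ B, IsClopen W) :
    Nonempty ((ℕ → ℕ) ≃ₜ S) :=
  have := hS.polishSpace
  have := hne.to_subtype
  nonempty_homeomorph_natNat_of_isTopologicalBasis hB hclopen fun _ hK hKo =>
    hK.eq_empty_of_isOpen_of_codense hSJ hdense hcodense hKo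

theorem isClopen_preimage_val_Ioo {α : Type*} [TopologicalSpace α] [LinearOrder α]
    [OrderClosedTopology α] {s : Set α} {a b : α} (ha : a ∉ s) (hb : b ∉ s) :
    IsClopen ((↑) ⁻¹' Ioo a b : Set s) := by
  have hIcc : ((↑) ⁻¹' Ioo a b : Set s) = (↑) ⁻¹' Icc a b := by
    ext x
    refine ⟨fun h => Ioo_subset_Icc_self h, fun h => ⟨h.1.lt_of_ne ?_, h.2.lt_of_ne ?_⟩⟩
    · exact fun hax => ha (hax ▸ x.2)
    · exact fun hxb => hb (hxb ▸ x.2)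
  exact ⟨hIcc ▸ isClosed_Icc.preimage continuous_subtype_val,
    isOpen_Ioo.preimage continuous_subtype_val⟩

theorem nonempty_homeomorph_natNat_irrational : Nonempty ((ℕ → ℕ) ≃ₜ {x : ℝ // Irrational x}) := by
  have hrat : range ((↑) : ℚ → ℝ) ⊆ univ \ {x | Irrational x} :=
    range_subset_iff.2 fun q => ⟨mem_univ _, Rat.not_irrational q⟩
  have hcodense : univ ⊆ closure (univ \ {x : ℝ | Irrational x}) := fun x _ =>
    Rat.denseRange_cast.mono hrat x
  refine IsGδ.setOfPred_irrational.nonempty_homeomorph_natNat (subset_univ _)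
    (fun x _ => dense_irrational x) hcodense ⟨√2, irrational_sqrt_two⟩
    (Real.isTopologicalBasis_Ioo_rat.isInducing IsInducing.subtypeVal) ?_
  simp only [mem_image, mem_iUnion, mem_singleton_iff]
  rintro _ ⟨_, ⟨a, b, -, rfl⟩, rfl⟩
  exact isClopen_preimage_val_Ioo (Rat.not_irrational a) (Rat.not_irrational b)

theorem stmt_18_general (X J : Set ℂ) (hX : IsGδ X) (hXJ : X ⊆ J)
    (hdense : J ⊆ closure X) (hcodense : J ⊆ closure (J \ X))
    (hne : X.Nonempty)
    (B : Set (Set X)) (hB : TopologicalSpace.IsTopologicalBasis B)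
    (hclopen : ∀ U ∈ B, IsClopen U) :
    Nonempty ((X : Set ℂ) ≃ₜ {x : ℝ // Irrational x}) := by
  obtain ⟨eX⟩ := hX.nonempty_homeomorph_natNat hXJ hdense hcodense hne hB hclopen
  obtain ⟨eIrr⟩ := nonempty_homeomorph_natNat_irrational
  exact ⟨eX.symm.trans eIrr⟩

/-- A nonempty zero-dimensional `G_δ` subset `X` of `ℂ`, contained in a closed set `J` in
which both `X` and `J \ X` are dense, is homeomorphic to the space of irrational numbers. -/
theorem stmt_18 (X J : Set ℂ) (hX : IsGδ X) (hJ : IsClosed J) (hXJ : X ⊆ J)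
    (hdense : J ⊆ closure X) (hcodense : J ⊆ closure (J \ X))
    (hne : X.Nonempty)
    (B : Set (Set X)) (hB : TopologicalSpace.IsTopologicalBasis B)
    (hclopen : ∀ U ∈ B, IsClopen U) :
    Nonempty ((X : Set ℂ) ≃ₜ {x : ℝ // Irrational x}) :=
  stmt_18_general X J hX hXJ hdense hcodense hne B hB hclopen
end
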